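/- arXiv:2204.14085 — 3 statements merged into one kernel-verified Lean document; each statement's English description precedes it below -/
import Mathlib

section
/- For α ∈ [1,2], define f_α(z) = (1/(2α))·(((1+z)/(1-z))^α − 1) for z in the unit disk, where the power uses the principal branch. Then f_α(0) = 0, f_α'(0) = 1, and all Taylor coefficients A_n of f_α at 0 are nonnegative real numbers. -/
/-!
Put `w = (1 + z) / (1 - z)`, so `w' = 2 / (1 - z)²` and `f_α = (w^α - 1) / (2α)` satisfies
`(1 - z²) f_α' = w^α = 1 + 2α f_α` on the disk. Differentiating `n + 1` times at `0` (Leibniz) gives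
`f_α⁽ⁿ⁺²⁾(0) = 2α f_α⁽ⁿ⁺¹⁾(0) + (n + 1) n f_α⁽ⁿ⁾(0)`, and with `f_α(0) = 0`, `f_α'(0) = 1` every
derivative at `0` is a nonnegative real. The Cauchy–Taylor expansion on the disk finishes the proof,
with `A n = f_α⁽ⁿ⁾(0) / n!`.
-/

open Metric Set Filter Topology
open scoped Nat

section IteratedDeriv

variable {𝕜 : Type*} [NontriviallyNormedField 𝕜] [CompleteSpace 𝕜]

theorem iteratedDeriv_succ_sq_mul_deriv_zero {u : 𝕜 → 𝕜} (hu : AnalyticAt 𝕜 u 0) (n : ℕ) :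
    iteratedDeriv (n + 1) (fun z => z ^ 2 * deriv u z) 0 = (n + 1) * n * iteratedDeriv n u 0 := by
  -- Leibniz: at `0` only the term carrying `(z ^ 2)'' = 2` survives.
  rw [iteratedDeriv_fun_mul (by fun_prop) hu.deriv.contDiffAt]
  simp only [iteratedDeriv_fun_pow_zero]
  rcases n with _ | n
  · simp
  · have hchoose : ((n + 1 + 1).choose 2 : 𝕜) * 2 = (n + 1 + 1) * (n + 1) := by
      have h := congrArg (Nat.cast (R := 𝕜)) (Nat.add_one_mul_choose_eq (n + 1) 1)
      push_cast [Nat.choose_one_right] at h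
      linear_combination -h
    simp only [Nat.factorial_two, Nat.cast_ite, Nat.cast_ofNat, Nat.cast_zero, mul_ite, mul_zero,
      ite_mul, zero_mul, Finset.sum_ite_eq', Finset.mem_range, lt_add_iff_pos_left,
      Order.lt_add_one_iff, zero_le, ↓reduceIte, Nat.reduceSubDiff, Nat.cast_add, Nat.cast_one,
      iteratedDeriv_succ']
    rw [hchoose]

theorem iteratedDeriv_add_two_of_deriv_eventuallyEq {u : 𝕜 → 𝕜} {a b : 𝕜}
    (hu : AnalyticAt 𝕜 u 0) (hode : deriv u =ᶠ[𝓝 0] fun z => b + (a * u z + z ^ 2 * deriv u z))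
    (n : ℕ) :
    iteratedDeriv (n + 2) u 0 =
      a * iteratedDeriv (n + 1) u 0 + (n + 1) * n * iteratedDeriv n u 0 := by
  rw [iteratedDeriv_succ' (n := n + 1), hode.iteratedDeriv_eq, iteratedDeriv_const_add n.succ_pos,
    iteratedDeriv_fun_add (contDiffAt_const.mul hu.contDiffAt)
      ((by fun_prop : ContDiffAt 𝕜 _ (fun z : 𝕜 => z ^ 2) 0).mul hu.deriv.contDiffAt),
    iteratedDeriv_const_mul_field, iteratedDeriv_succ_sq_mul_deriv_zero hu]

end IteratedDeriv

theorem nonneg_of_two_step_recurrence {R : Type*} [Semiring R] [PartialOrder R] [IsOrderedRing R]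
    {x : ℕ → R} {a : R} (ha : 0 ≤ a) (h0 : 0 ≤ x 0) (h1 : 0 ≤ x 1)
    (hrec : ∀ n : ℕ, x (n + 2) = a * x (n + 1) + (n + 1) * n * x n) : ∀ n, 0 ≤ x n
  | 0 => h0
  | 1 => h1
  | n + 2 => by
    have hn1 := nonneg_of_two_step_recurrence ha h0 h1 hrec (n + 1)
    have hn := nonneg_of_two_step_recurrence ha h0 h1 hrec n
    have hcoeff : (0 : R) ≤ (n + 1) * n :=
      mul_nonneg (add_nonneg n.cast_nonneg zero_le_one) n.cast_nonneg
    rw [hrec]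
    exact add_nonneg (mul_nonneg ha hn1) (mul_nonneg hcoeff hn)

theorem one_sub_ne_zero_of_norm_lt_one {z : ℂ} (hz : ‖z‖ < 1) : 1 - z ≠ 0 := by
  rintro h
  rw [← sub_eq_zero.1 h] at hz
  simp at hz

theorem one_add_ne_zero_of_norm_lt_one {z : ℂ} (hz : ‖z‖ < 1) : 1 + z ≠ 0 := by
  simpa using one_sub_ne_zero_of_norm_lt_one (z := -z) (by simpa using hz)

theorem re_one_add_div_one_sub_pos {z : ℂ} (hz : ‖z‖ < 1) : 0 < ((1 + z) / (1 - z)).re := by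
  rw [Complex.div_re, ← add_div]
  refine div_pos ?_ (Complex.normSq_pos.2 (one_sub_ne_zero_of_norm_lt_one hz))
  have hnorm : ‖z‖ ^ 2 = z.re ^ 2 + z.im ^ 2 := by rw [Complex.sq_norm, Complex.normSq_apply]; ring
  simp only [Complex.add_re, Complex.one_re, Complex.sub_re, Complex.add_im, Complex.one_im,
    Complex.sub_im]
  nlinarith [norm_nonneg z]

theorem hasDerivAt_one_add_div_one_sub_cpow (a : ℂ) {z : ℂ} (hz : ‖z‖ < 1) :
    HasDerivAt (fun z => ((1 + z) / (1 - z)) ^ a)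
      (2 * a * ((1 + z) / (1 - z)) ^ a / (1 - z ^ 2)) z := by
  have h1 := one_sub_ne_zero_of_norm_lt_one hz
  have h2 := one_add_ne_zero_of_norm_lt_one hz
  have hw : HasDerivAt (fun z => (1 + z) / (1 - z)) (2 / (1 - z) ^ 2) z := by
    refine (((hasDerivAt_id z).const_add 1).div ((hasDerivAt_id z).const_sub 1)
      h1).congr_deriv ?_
    simp only [id]
    ring
  refine (hw.cpow_const (Or.inl (re_one_add_div_one_sub_pos hz))).congr_deriv ?_
  rw [Complex.cpow_sub _ _ (div_ne_zero h2 h1), Complex.cpow_one]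
  generalize ((1 + z) / (1 - z)) ^ a = p
  have : 1 - z ^ 2 = (1 - z) * (1 + z) := by ring
  rw [this]
  field_simp

noncomputable def extremalConcave (a z : ℂ) : ℂ :=
  1 / (2 * a) * (((1 + z) / (1 - z)) ^ a - 1)

theorem extremalConcave_zero (a : ℂ) : extremalConcave a 0 = 0 := by
  simp [extremalConcave]

theorem hasDerivAt_extremalConcave {a : ℂ} (ha : a ≠ 0) {z : ℂ} (hz : ‖z‖ < 1) :
    HasDerivAt (extremalConcave a) (((1 + z) / (1 - z)) ^ a / (1 - z ^ 2)) z := by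
  refine (((hasDerivAt_one_add_div_one_sub_cpow a hz).sub_const 1).const_mul
    (1 / (2 * a))).congr_deriv ?_
  field_simp

theorem differentiableOn_extremalConcave (a : ℂ) :
    DifferentiableOn ℂ (extremalConcave a) (ball 0 1) := fun _ hz =>
  (((hasDerivAt_one_add_div_one_sub_cpow a (mem_ball_zero_iff.1 hz)).differentiableAt.sub_const
    1).const_mul _).differentiableWithinAt

theorem deriv_extremalConcave {a : ℂ} (ha : a ≠ 0) {z : ℂ} (hz : ‖z‖ < 1) :
    deriv (extremalConcave a) z =
      1 + (2 * a * extremalConcave a z + z ^ 2 * deriv (extremalConcave a) z) := by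
  have hz2 : 1 - z ^ 2 ≠ 0 := by
    rw [show 1 - z ^ 2 = (1 - z) * (1 + z) by ring]
    exact mul_ne_zero (one_sub_ne_zero_of_norm_lt_one hz) (one_add_ne_zero_of_norm_lt_one hz)
  rw [(hasDerivAt_extremalConcave ha hz).deriv, extremalConcave]
  field_simp
  ring

theorem deriv_extremalConcave_zero {a : ℂ} (ha : a ≠ 0) : deriv (extremalConcave a) 0 = 1 := by
  simpa [extremalConcave_zero] using deriv_extremalConcave ha (z := 0) (by simp)

-- `0 ≤ z` in `ComplexOrder` says that `z` is a nonnegative real.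
open scoped ComplexOrder in
theorem iteratedDeriv_extremalConcave_nonneg {α : ℝ} (hα : 0 < α) (n : ℕ) :
    0 ≤ iteratedDeriv n (extremalConcave α) 0 := by
  have hode : deriv (extremalConcave α) =ᶠ[𝓝 0]
      fun z => 1 + (2 * α * extremalConcave α z + z ^ 2 * deriv (extremalConcave α) z) :=
    eventually_of_mem (ball_mem_nhds 0 one_pos) fun z hz =>
      deriv_extremalConcave (Complex.ofReal_ne_zero.2 hα.ne') (mem_ball_zero_iff.1 hz)
  have hf0 := extremalConcave_zero α
  refine nonneg_of_two_step_recurrence (x := fun n => iteratedDeriv n (extremalConcave α) 0)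
    ?_ ?_ ?_ (iteratedDeriv_add_two_of_deriv_eventuallyEq
      ((differentiableOn_extremalConcave α).analyticAt (ball_mem_nhds 0 one_pos)) hode) n
  · exact mul_nonneg zero_le_two (Complex.zero_le_real.2 hα.le)
  · simp [hf0]
  · simp [deriv_extremalConcave_zero (Complex.ofReal_ne_zero.2 hα.ne')]

/-- The extremal concave function `f_α(z) = (1/(2α))(((1+z)/(1-z))^α - 1)`
(principal branch) satisfies `f_α(0) = 0`, `f_α'(0) = 1`, and has nonnegative
real Taylor coefficients at the origin. -/
theorem extremal_concave_coeffs_nonneg (α : ℝ) (hα : α ∈ Icc (1 : ℝ) 2) :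
    (fun z : ℂ => (1 / (2 * (α : ℂ))) * (((1 + z) / (1 - z)) ^ (α : ℂ) - 1)) 0 = 0 ∧
    deriv (fun z : ℂ => (1 / (2 * (α : ℂ))) * (((1 + z) / (1 - z)) ^ (α : ℂ) - 1)) 0 = 1 ∧
    ∃ A : ℕ → ℝ, (∀ n, 0 ≤ A n) ∧
      ∀ z ∈ ball (0 : ℂ) 1,
        HasSum (fun n : ℕ => (A n : ℂ) * z ^ n)
          ((1 / (2 * (α : ℂ))) * (((1 + z) / (1 - z)) ^ (α : ℂ) - 1)) := by
  change extremalConcave α 0 = 0 ∧ deriv (extremalConcave α) 0 = 1 ∧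
    ∃ A : ℕ → ℝ, (∀ n, 0 ≤ A n) ∧
      ∀ z ∈ ball (0 : ℂ) 1, HasSum (fun n : ℕ => (A n : ℂ) * z ^ n) (extremalConcave α z)
  have hα0 : 0 < α := zero_lt_one.trans_le hα.1
  have hreal n :
      iteratedDeriv n (extremalConcave α) 0 = (iteratedDeriv n (extremalConcave α) 0).re :=
    Complex.eq_re_of_ofReal_le
      (by rw [Complex.ofReal_zero]; exact iteratedDeriv_extremalConcave_nonneg hα0 n)
  refine ⟨extremalConcave_zero α, ?_, fun n => (iteratedDeriv n (extremalConcave α) 0).re / n !,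
    fun n => ?_, fun z hz => ?_⟩
  · exact deriv_extremalConcave_zero (Complex.ofReal_ne_zero.2 hα0.ne')
  · exact div_nonneg (Complex.nonneg_iff.1 (iteratedDeriv_extremalConcave_nonneg hα0 n)).1
      (by positivity)
  · refine (Complex.hasSum_taylorSeries_on_ball (differentiableOn_extremalConcave α) hz).congr_fun
      fun n => ?_
    rw [Complex.ofReal_div, ← hreal, smul_eq_mul, smul_eq_mul, sub_zero, Complex.ofReal_natCast]
    ring
end

section
/- For p ∈ (0,1), the image of the unit disk under k_p(z) = pz/((p−z)(1−pz)) is the complement in the extended complex plane of the real segment [−p/(1−p)², −p/(1+p)²], and the Euclidean distance from k_p(0) = 0 to the boundary of k_p(D) equals p/(1+p)². -/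
/-!
Dividing numerator and denominator by `z` gives `k_p(z) = p / (p (z + z⁻¹) - (1 + p²))`, so
`k_p(z) = w ≠ 0` exactly when `z + z⁻¹ = w⁻¹ + p + p⁻¹`. The Joukowski map `z ↦ z + z⁻¹` sends the
punctured unit disk onto the complement of `[-2, 2]`: the two solutions of `z + z⁻¹ = u` are
reciprocal, so one of them lies in the disk unless both lie on the unit circle, where
`z + z⁻¹ = 2 Re z`. The Möbius map `w ↦ w⁻¹ + p + p⁻¹` carries `[-p/(1-p)², -p/(1+p)²]` onto
`[-2, 2]`. A real segment has empty interior in `ℂ`, so it is the frontier of its complement, and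
its point nearest to `0` is its right end.
-/

open Metric Set Complex

theorem exists_add_inv_eq (u : ℂ) : ∃ z : ℂ, z ≠ 0 ∧ z + z⁻¹ = u := by
  obtain ⟨z, hz⟩ := exists_quadratic_eq_zero (a := (1 : ℂ)) (b := -u) (c := 1) one_ne_zero
    (IsAlgClosed.exists_eq_mul_self _)
  have hz0 : z ≠ 0 := by rintro rfl; simp at hz
  refine ⟨z, hz0, ?_⟩
  field_simp
  linear_combination hz

theorem add_inv_mem_ofReal_Icc_of_norm_eq_one {z : ℂ} (hz : ‖z‖ = 1) :
    z + z⁻¹ ∈ ofReal '' Icc (-2) 2 := by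
  refine ⟨2 * z.re, ?_, by rw [inv_eq_conj hz, add_conj]⟩
  have := abs_le.mp (hz ▸ abs_re_le_norm z)
  constructor <;> linarith

theorem add_inv_notMem_ofReal_Icc {z : ℂ} (hz0 : z ≠ 0) (hz1 : ‖z‖ < 1) :
    z + z⁻¹ ∉ ofReal '' Icc (-2) 2 := by
  rintro ⟨t, ht, htz⟩
  have hn0 : 0 < normSq z := normSq_pos.mpr hz0
  have hn1 : normSq z < 1 := by rw [normSq_eq_norm_sq]; nlinarith [norm_nonneg z]
  -- `Im (z + z⁻¹) = Im z * (1 - 1 / ‖z‖²)` and `‖z‖ < 1`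
  have him : z.im = 0 := by
    have h := congrArg im htz
    rw [ofReal_im, add_im, inv_im] at h
    field_simp at h
    nlinarith
  set x := z.re
  have hzx : z = x := ext rfl (by simpa using him)
  have hx0 : x ≠ 0 := by rintro hx; exact hz0 (by rw [hzx, hx, ofReal_zero])
  have hx1 : x ^ 2 < 1 := by simpa [hzx, normSq_ofReal, sq] using hn1
  have htx : t * x = x ^ 2 + 1 := by
    rw [hzx] at htz
    have : t = x + x⁻¹ := by exact_mod_cast htz
    rw [this]; field_simp
  have ht2 : t ^ 2 ≤ 4 := by nlinarith [ht.1, ht.2]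
  -- `(x² + 1)² = t² x² ≤ 4 x²` forces `x² = 1`
  nlinarith [mul_le_mul_of_nonneg_right ht2 (sq_nonneg x),
    mul_pos (sub_pos.mpr hx1) (sub_pos.mpr hx1)]

theorem exists_add_inv_eq_iff_notMem (u : ℂ) :
    (∃ z : ℂ, z ≠ 0 ∧ ‖z‖ < 1 ∧ z + z⁻¹ = u) ↔ u ∉ ofReal '' Icc (-2) 2 := by
  constructor
  · rintro ⟨z, hz0, hz1, rfl⟩
    exact add_inv_notMem_ofReal_Icc hz0 hz1
  · intro hu
    obtain ⟨z, hz0, rfl⟩ := exists_add_inv_eq u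
    rcases lt_trichotomy ‖z‖ 1 with h | h | h
    · exact ⟨z, hz0, h, rfl⟩
    · exact absurd (add_inv_mem_ofReal_Icc_of_norm_eq_one h) hu
    · refine ⟨z⁻¹, inv_ne_zero hz0, ?_, by rw [inv_inv, add_comm]⟩
      rw [norm_inv]
      exact inv_lt_one_of_one_lt₀ h

theorem inv_add_mem_Icc_iff {p t : ℝ} (hp0 : 0 < p) (hp1 : p < 1) (ht : t ≠ 0) :
    t⁻¹ + p + p⁻¹ ∈ Icc (-2) 2 ↔ t ∈ Icc (-(p / (1 - p) ^ 2)) (-(p / (1 + p) ^ 2)) := by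
  have hm : 0 < (1 - p) ^ 2 := by nlinarith
  have hP : 0 < (1 + p) ^ 2 := by nlinarith
  have hpt : t⁻¹ + p + p⁻¹ = (p + t * (1 + p ^ 2)) / (p * t) := by field_simp; ring
  rcases ht.lt_or_gt with ht0 | ht0
  · have hpt0 : p * t < 0 := mul_neg_of_pos_of_neg hp0 ht0
    simp only [mem_Icc, hpt, le_div_iff_of_neg hpt0, div_le_iff_of_neg hpt0, neg_le, le_neg,
      le_div_iff₀ hm, div_le_iff₀ hP]
    constructor <;> rintro ⟨h1, h2⟩ <;> constructor <;> nlinarith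
  · have hpt0 : 0 < p * t := mul_pos hp0 ht0
    simp only [mem_Icc, hpt, div_le_iff₀ hpt0, le_div_iff₀ hpt0]
    constructor <;> rintro ⟨h1, h2⟩ <;> nlinarith [div_pos hp0 hP]

theorem inv_add_mem_ofReal_Icc_iff {p : ℝ} (hp0 : 0 < p) (hp1 : p < 1) {w : ℂ} (hw : w ≠ 0) :
    w⁻¹ + p + (p : ℂ)⁻¹ ∈ ofReal '' Icc (-2) 2 ↔
      w ∈ ofReal '' Icc (-(p / (1 - p) ^ 2)) (-(p / (1 + p) ^ 2)) := by
  constructor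
  · rintro ⟨s, hs, hsw⟩
    have hwt : w = ((s - p - p⁻¹)⁻¹ : ℝ) := by
      have hwinv : w⁻¹ = ((s - p - p⁻¹ : ℝ) : ℂ) := by push_cast; rw [hsw]; ring
      rw [← inv_inv w, hwinv, ofReal_inv]
    have ht : (s - p - p⁻¹)⁻¹ ≠ 0 := by
      rintro h; exact hw (by rw [hwt, h, ofReal_zero])
    refine ⟨_, (inv_add_mem_Icc_iff hp0 hp1 ht).mp ?_, hwt.symm⟩
    convert hs using 1
    rw [inv_inv]; ring
  · rintro ⟨t, ht, rfl⟩
    have ht0 : t ≠ 0 := by rintro rfl; exact hw ofReal_zero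
    exact ⟨t⁻¹ + p + p⁻¹, (inv_add_mem_Icc_iff hp0 hp1 ht0).mpr ht, by push_cast; rfl⟩

noncomputable def kp (p : ℝ) (z : ℂ) : ℂ := p * z / ((p - z) * (1 - p * z))

theorem kp_eq_iff_add_inv_eq {p : ℝ} {z w : ℂ} (hp : p ≠ 0) (hz : z ≠ 0) (hw : w ≠ 0)
    (hzp : z ≠ p) (hpz : (p : ℂ) * z ≠ 1) :
    kp p z = w ↔ z + z⁻¹ = w⁻¹ + p + (p : ℂ)⁻¹ := by
  have hpC : (p : ℂ) ≠ 0 := ofReal_ne_zero.mpr hp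
  have hden : ((p : ℂ) - z) * (1 - p * z) ≠ 0 :=
    mul_ne_zero (sub_ne_zero.mpr hzp.symm) (sub_ne_zero.mpr hpz.symm)
  rw [kp, div_eq_iff hden]
  field_simp
  constructor <;> intro h <;> linear_combination -h

theorem norm_ofReal_mul_ne_one {p : ℝ} {z : ℂ} (hp : |p| ≤ 1) (hz : ‖z‖ < 1) :
    (p : ℂ) * z ≠ 1 := by
  intro h
  have := congrArg norm h
  rw [norm_mul, norm_real, Real.norm_eq_abs, norm_one] at this
  nlinarith [abs_nonneg p, norm_nonneg z]

theorem mem_kp_image_iff {p : ℝ} (hp0 : 0 < p) (hp1 : p < 1) {w : ℂ} (hw : w ≠ 0) :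
    w ∈ kp p '' (ball 0 1 \ {(p : ℂ)}) ↔
      ∃ z : ℂ, z ≠ 0 ∧ ‖z‖ < 1 ∧ z + z⁻¹ = w⁻¹ + p + (p : ℂ)⁻¹ := by
  have hpz {z : ℂ} (hz : ‖z‖ < 1) : (p : ℂ) * z ≠ 1 :=
    norm_ofReal_mul_ne_one (abs_le.mpr ⟨by linarith, hp1.le⟩) hz
  constructor
  · rintro ⟨z, ⟨hz1, hzp⟩, rfl⟩
    rw [mem_ball_zero_iff] at hz1
    have hz0 : z ≠ 0 := by rintro rfl; simp [kp] at hw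
    exact ⟨z, hz0, hz1, (kp_eq_iff_add_inv_eq hp0.ne' hz0 hw hzp (hpz hz1)).mp rfl⟩
  · rintro ⟨z, hz0, hz1, hzw⟩
    have hzp : z ≠ p := by
      rintro rfl
      exact inv_ne_zero hw (by linear_combination -hzw)
    exact ⟨z, ⟨mem_ball_zero_iff.mpr hz1, hzp⟩,
      (kp_eq_iff_add_inv_eq hp0.ne' hz0 hw hzp (hpz hz1)).mpr hzw⟩

theorem kp_image_ball_diff {p : ℝ} (hp0 : 0 < p) (hp1 : p < 1) :
    kp p '' (ball 0 1 \ {(p : ℂ)}) =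
      (ofReal '' Icc (-(p / (1 - p) ^ 2)) (-(p / (1 + p) ^ 2)))ᶜ := by
  ext w
  rcases eq_or_ne w 0 with rfl | hw
  · have hzero : (0 : ℂ) ∈ kp p '' (ball 0 1 \ {(p : ℂ)}) :=
      ⟨0, ⟨mem_ball_self one_pos, (ofReal_ne_zero.mpr hp0.ne').symm⟩, by simp [kp]⟩
    have hseg : (0 : ℂ) ∉ ofReal '' Icc (-(p / (1 - p) ^ 2)) (-(p / (1 + p) ^ 2)) := by
      rintro ⟨t, ht, ht0⟩
      rw [ofReal_eq_zero.mp ht0] at ht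
      linarith [ht.2, show 0 < p / (1 + p) ^ 2 by positivity]
    simp only [hzero, mem_compl_iff, hseg, not_false_eq_true]
  · rw [mem_kp_image_iff hp0 hp1 hw, exists_add_inv_eq_iff_notMem, mem_compl_iff,
      inv_add_mem_ofReal_Icc_iff hp0 hp1 hw]

theorem interior_ofReal_image (s : Set ℝ) : interior (ofReal '' s) = ∅ := by
  have hsub : ofReal '' s ⊆ im ⁻¹' {0} := by
    rintro _ ⟨t, -, rfl⟩
    exact ofReal_im t
  refine eq_empty_of_subset_empty ((interior_mono hsub).trans_eq ?_)
  rw [interior_preimage_im, interior_singleton, preimage_empty]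

theorem frontier_compl_ofReal_image {s : Set ℝ} (hs : IsClosed s) :
    frontier (ofReal '' s)ᶜ = ofReal '' s := by
  rw [frontier_compl, (isometry_ofReal.isClosedEmbedding.isClosedMap s hs).frontier_eq,
    interior_ofReal_image, sdiff_empty]

theorem infDist_zero_ofReal_Icc {a b : ℝ} (hab : a ≤ b) (hb : b < 0) :
    infDist 0 (ofReal '' Icc a b) = -b := by
  rw [← ofReal_zero, infDist_image isometry_ofReal]
  refine le_antisymm ?_ ((le_infDist (nonempty_Icc.2 hab)).2 fun y hy => ?_)
  · simpa [Real.dist_eq, abs_of_neg hb] using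
      infDist_le_dist_of_mem (x := (0 : ℝ)) (right_mem_Icc.2 hab)
  · rw [Real.dist_eq, zero_sub, abs_neg]
    linarith [neg_le_abs y, hy.2]

/-- The image of the unit disk (minus the pole `p`) under
`k_p(z) = pz/((p-z)(1-pz))` is the complement of the real segment
`[-p/(1-p)², -p/(1+p)²]`, and the distance from `k_p(0) = 0` to the boundary of
the image is `p/(1+p)²`. -/
theorem kp_image_and_dist (p : ℝ) (hp : p ∈ Ioo (0 : ℝ) 1) :
    (fun z : ℂ => (p : ℂ) * z / (((p : ℂ) - z) * (1 - (p : ℂ) * z))) ''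
        (ball (0 : ℂ) 1 \ {(p : ℂ)})
      = ((fun t : ℝ => (t : ℂ)) '' Icc (-(p / (1 - p) ^ 2)) (-(p / (1 + p) ^ 2)))ᶜ ∧
    infDist (0 : ℂ)
      (frontier ((fun z : ℂ => (p : ℂ) * z / (((p : ℂ) - z) * (1 - (p : ℂ) * z))) ''
        (ball (0 : ℂ) 1 \ {(p : ℂ)}))) = p / (1 + p) ^ 2 := by
  obtain ⟨hp0, hp1⟩ := hp
  have hright : -(p / (1 + p) ^ 2) < 0 := neg_neg_of_pos (by positivity)
  have hle : -(p / (1 - p) ^ 2) ≤ -(p / (1 + p) ^ 2) :=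
    neg_le_neg (div_le_div_of_nonneg_left hp0.le (by nlinarith) (by nlinarith))
  have himage := kp_image_ball_diff hp0 hp1
  refine ⟨himage, ?_⟩
  rw [show (fun z : ℂ => (p : ℂ) * z / (((p : ℂ) - z) * (1 - (p : ℂ) * z))) = kp p from rfl,
    himage, frontier_compl_ofReal_image isClosed_Icc, infDist_zero_ofReal_Icc hle hright, neg_neg]
end

section
/- Fix α ∈ [1,2], positive integers N, m₀, m₁, m₂, and a function h : ℕ → ℕ with h(n) ≥ n. Let A_n be the Taylor coefficients of f_α. Define K(x) = Σ_{n=N}^∞ A_n x^{h(n)} + f_α(x^{m₀}) + x^{m₂}·(1+x^{m₁})^{α−1}/(1−x^{m₁})^{α+1} − 1/(2α) for x ∈ [0,1). Then K is strictly increasing on (0,1), K(0) < 0, K(x) → +∞ as x → 1⁻, and K has a unique root in (0,1). -/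
open Set Filter Topology

lemma base_lt_aux {u v : ℝ} (huv : u < v) (hv : v < 1) (hu : -1 < u) :
    (1 + u) / (1 - u) < (1 + v) / (1 - v) := by
  rw [div_lt_div_iff₀ (by linarith) (by linarith)]
  nlinarith

lemma one_le_base_aux {u : ℝ} (hu : 0 ≤ u) (hv : u < 1) : 1 ≤ (1 + u) / (1 - u) := by
  rw [le_div_iff₀ (by linarith)]; linarith

set_option maxHeartbeats 1000000 in
/-- Properties of
`K(x) = Σ_{n≥N} A_n x^{h(n)} + f_α(x^{m₀}) + x^{m₂}(1+x^{m₁})^{α-1}/(1-x^{m₁})^{α+1} - 1/(2α)`: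
strictly increasing on `(0,1)`, negative at `0`, tends to `+∞` at `1⁻`, with a
unique root in `(0,1)`. -/
theorem generalized_bohr_rogosinski_radius_eq (α : ℝ) (hα : α ∈ Icc (1 : ℝ) 2)
    (N m₀ m₁ m₂ : ℕ) (hN : 1 ≤ N) (hm₀ : 1 ≤ m₀) (hm₁ : 1 ≤ m₁) (hm₂ : 1 ≤ m₂)
    (h : ℕ → ℕ) (hh : ∀ n, n ≤ h n)
    (A : ℕ → ℝ) (hA : ∀ n, 0 ≤ A n)
    (hsum : ∀ x ∈ Ico (0 : ℝ) 1,
      HasSum (fun n : ℕ => A n * x ^ n)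
        ((1 / (2 * α)) * (((1 + x) / (1 - x)) ^ α - 1)))
    (K : ℝ → ℝ)
    (hK : ∀ x ∈ Ico (0 : ℝ) 1,
      K x = (∑' n : ℕ, A (n + N) * x ^ h (n + N))
        + (1 / (2 * α)) * (((1 + x ^ m₀) / (1 - x ^ m₀)) ^ α - 1)
        + x ^ m₂ * (1 + x ^ m₁) ^ (α - 1) / (1 - x ^ m₁) ^ (α + 1)
        - 1 / (2 * α)) :
    StrictMonoOn K (Ioo (0 : ℝ) 1) ∧ K 0 < 0 ∧
    Tendsto K (nhdsWithin 1 (Iio (1 : ℝ))) atTop ∧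
    ∃! r : ℝ, r ∈ Ioo (0 : ℝ) 1 ∧ K r = 0 := by
  obtain ⟨hα1, hα2⟩ := hα
  have hα0 : (0:ℝ) < α := by linarith
  have hc : (0:ℝ) < 1/(2*α) := by positivity
  -- summability
  have hsummable : ∀ x ∈ Ico (0:ℝ) 1, Summable (fun n : ℕ => A (n + N) * x ^ h (n + N)) := by
    intro x hx
    have h2 : Summable (fun n : ℕ => A (n+N) * x ^ (n+N)) :=
      (summable_nat_add_iff N).2 (hsum x hx).summable
    refine h2.of_nonneg_of_le (fun n => mul_nonneg (hA _) (pow_nonneg hx.1 _)) (fun n => ?_)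
    exact mul_le_mul_of_nonneg_left (pow_le_pow_of_le_one hx.1 hx.2.le (hh _)) (hA _)
  have hpowlt : ∀ (m : ℕ), 1 ≤ m → ∀ x : ℝ, 0 ≤ x → x < 1 → x ^ m < 1 :=
    fun m hm x hx0 hx1 => pow_lt_one₀ hx0 hx1 (by omega)
  -- nonnegativity of the pieces
  have hS0 : ∀ x ∈ Ico (0:ℝ) 1, 0 ≤ ∑' n : ℕ, A (n + N) * x ^ h (n + N) :=
    fun x hx => tsum_nonneg (fun n => mul_nonneg (hA _) (pow_nonneg hx.1 _))
  have hG0 : ∀ x ∈ Ico (0:ℝ) 1,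
      0 ≤ (1/(2*α)) * (((1 + x ^ m₀)/(1 - x ^ m₀)) ^ α - 1) := by
    intro x hx
    have hb : 1 ≤ (1 + x ^ m₀)/(1 - x ^ m₀) :=
      one_le_base_aux (pow_nonneg hx.1 _) (hpowlt m₀ hm₀ x hx.1 hx.2)
    have h1 : 1 ≤ ((1 + x ^ m₀)/(1 - x ^ m₀)) ^ α := Real.one_le_rpow hb hα0.le
    exact mul_nonneg hc.le (by linarith)
  -- strict monotonicity of the pieces
  have hSmono : ∀ x ∈ Ico (0:ℝ) 1, ∀ y ∈ Ico (0:ℝ) 1, x ≤ y →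
      (∑' n : ℕ, A (n + N) * x ^ h (n + N)) ≤ ∑' n : ℕ, A (n + N) * y ^ h (n + N) := by
    intro x hx y hy hxy
    exact Summable.tsum_le_tsum
      (fun n => mul_le_mul_of_nonneg_left (pow_le_pow_left₀ hx.1 hxy _) (hA _))
      (hsummable x hx) (hsummable y hy)
  have hGmono : ∀ x ∈ Ico (0:ℝ) 1, ∀ y ∈ Ico (0:ℝ) 1, x < y →
      (1/(2*α)) * (((1 + x ^ m₀)/(1 - x ^ m₀)) ^ α - 1)
        < (1/(2*α)) * (((1 + y ^ m₀)/(1 - y ^ m₀)) ^ α - 1) := by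
    intro x hx y hy hxy
    have hu : x ^ m₀ < y ^ m₀ := pow_lt_pow_left₀ hxy hx.1 (by omega)
    have hv : y ^ m₀ < 1 := hpowlt m₀ hm₀ y hy.1 hy.2
    have hb : (1 + x ^ m₀)/(1 - x ^ m₀) < (1 + y ^ m₀)/(1 - y ^ m₀) :=
      base_lt_aux hu hv (by have := pow_nonneg hx.1 m₀; linarith)
    have hbx : (0:ℝ) ≤ (1 + x ^ m₀)/(1 - x ^ m₀) := by
      have := one_le_base_aux (pow_nonneg hx.1 _) (hpowlt m₀ hm₀ x hx.1 hx.2); linarith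
    have := Real.rpow_lt_rpow hbx hb hα0
    exact mul_lt_mul_of_pos_left (by linarith) hc
  have hTmono : ∀ x ∈ Ico (0:ℝ) 1, ∀ y ∈ Ico (0:ℝ) 1, x < y →
      x ^ m₂ * (1 + x ^ m₁) ^ (α-1) / (1 - x ^ m₁) ^ (α+1)
        < y ^ m₂ * (1 + y ^ m₁) ^ (α-1) / (1 - y ^ m₁) ^ (α+1) := by
    intro x hx y hy hxy
    have hdx : (0:ℝ) < 1 - x ^ m₁ := by
      have := hpowlt m₁ hm₁ x hx.1 hx.2; linarith
    have hdy : (0:ℝ) < 1 - y ^ m₁ := by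
      have := hpowlt m₁ hm₁ y hy.1 hy.2; linarith
    have hnum : x ^ m₂ * (1 + x ^ m₁) ^ (α-1) < y ^ m₂ * (1 + y ^ m₁) ^ (α-1) := by
      have hx1 : (0:ℝ) ≤ x ^ m₁ := pow_nonneg hx.1 _
      have hy1 : (0:ℝ) ≤ y ^ m₁ := pow_nonneg hy.1 _
      refine mul_lt_mul (pow_lt_pow_left₀ hxy hx.1 (by omega)) ?_ ?_
        (pow_nonneg (le_trans hx.1 hxy.le) _)
      · refine Real.rpow_le_rpow (by linarith) ?_ (by linarith)
        have : x ^ m₁ ≤ y ^ m₁ := pow_le_pow_left₀ hx.1 hxy.le _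
        linarith
      · exact Real.rpow_pos_of_pos (by linarith) _
    have hden : (1 - y ^ m₁) ^ (α+1) ≤ (1 - x ^ m₁) ^ (α+1) := by
      refine Real.rpow_le_rpow hdy.le ?_ (by linarith)
      have : x ^ m₁ ≤ y ^ m₁ := pow_le_pow_left₀ hx.1 hxy.le _
      linarith
    have hdyp : (0:ℝ) < (1 - y ^ m₁) ^ (α+1) := Real.rpow_pos_of_pos hdy _
    have hdxp : (0:ℝ) < (1 - x ^ m₁) ^ (α+1) := Real.rpow_pos_of_pos hdx _
    calc x ^ m₂ * (1 + x ^ m₁) ^ (α-1) / (1 - x ^ m₁) ^ (α+1)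
        < y ^ m₂ * (1 + y ^ m₁) ^ (α-1) / (1 - x ^ m₁) ^ (α+1) :=
          div_lt_div_of_pos_right hnum hdxp
      _ ≤ y ^ m₂ * (1 + y ^ m₁) ^ (α-1) / (1 - y ^ m₁) ^ (α+1) := by
          apply div_le_div_of_nonneg_left _ hdyp hden
          have hy1 : (0:ℝ) ≤ y ^ m₁ := pow_nonneg hy.1 _
          exact mul_nonneg (pow_nonneg hy.1 _) (Real.rpow_nonneg (by linarith) _)
  have hmono : StrictMonoOn K (Ioo (0:ℝ) 1) := by
    intro x hx y hy hxy
    have hx' : x ∈ Ico (0:ℝ) 1 := ⟨hx.1.le, hx.2⟩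
    have hy' : y ∈ Ico (0:ℝ) 1 := ⟨hy.1.le, hy.2⟩
    rw [hK x hx', hK y hy']
    have h1 := hSmono x hx' y hy' hxy.le
    have h2 := hGmono x hx' y hy' hxy
    have h3 := hTmono x hx' y hy' hxy
    linarith
  -- value at 0
  have hzero : K 0 < 0 := by
    have h0 : (0:ℝ) ∈ Ico (0:ℝ) 1 := ⟨le_refl _, one_pos⟩
    have hm₀' : m₀ ≠ 0 := by omega
    have hm₁' : m₁ ≠ 0 := by omega
    have hm₂' : m₂ ≠ 0 := by omega
    have hS : (∑' n : ℕ, A (n + N) * (0:ℝ) ^ h (n + N)) = 0 := by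
      have hterm : ∀ n : ℕ, A (n + N) * (0:ℝ) ^ h (n + N) = 0 := by
        intro n
        have : h (n + N) ≠ 0 := by have := hh (n + N); omega
        simp [zero_pow this]
      simp [hterm]
    rw [hK 0 h0, hS, zero_pow hm₀', zero_pow hm₁', zero_pow hm₂']
    norm_num
    positivity
  -- tendsto atTop
  have hTtop : Tendsto (fun x : ℝ => x ^ m₂ * (1 + x ^ m₁) ^ (α-1) / (1 - x ^ m₁) ^ (α+1))
      (𝓝[<] (1:ℝ)) atTop := by
    have hnum : Tendsto (fun x:ℝ => x ^ m₂ * (1 + x ^ m₁) ^ (α-1)) (𝓝[<] (1:ℝ))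
        (𝓝 ((1:ℝ) ^ m₂ * (1 + (1:ℝ) ^ m₁) ^ (α-1))) := by
      apply Tendsto.mono_left _ nhdsWithin_le_nhds
      exact ((continuousAt_pow _ _).mul
        ((continuousAt_const.add (continuousAt_pow _ _)).rpow_const
          (Or.inr (by linarith)))).tendsto
    have hCpos : (0:ℝ) < (1:ℝ) ^ m₂ * (1 + (1:ℝ) ^ m₁) ^ (α-1) := by
      have := Real.rpow_pos_of_pos (by norm_num : (0:ℝ) < 1 + (1:ℝ) ^ m₁) (α-1)
      simpa using this
    have hden : Tendsto (fun x:ℝ => (1 - x ^ m₁) ^ (α+1)) (𝓝[<] (1:ℝ)) (𝓝[>] 0) := by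
      rw [tendsto_nhdsWithin_iff]
      constructor
      · have hca : ContinuousAt (fun x:ℝ => (1 - x ^ m₁) ^ (α+1)) 1 :=
          (continuousAt_const.sub (continuousAt_pow _ _)).rpow_const (Or.inr (by linarith))
        have := hca.tendsto.mono_left (nhdsWithin_le_nhds (s := Iio (1:ℝ)))
        simpa [Real.zero_rpow (by linarith : α + 1 ≠ 0)] using this
      · filter_upwards [Ioo_mem_nhdsLT_of_mem
          (by constructor <;> norm_num : (1:ℝ) ∈ Ioc (0:ℝ) 1)] with x hx
        have : x ^ m₁ < 1 := hpowlt m₁ hm₁ x hx.1.le hx.2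
        exact Real.rpow_pos_of_pos (by linarith) _
    have := hnum.pos_mul_atTop hCpos hden.inv_tendsto_nhdsGT_zero
    refine this.congr (fun x => ?_)
    simp [div_eq_mul_inv]
  have htop : Tendsto K (𝓝[<] (1:ℝ)) atTop := by
    have h1 : Tendsto (fun x : ℝ =>
        x ^ m₂ * (1 + x ^ m₁) ^ (α-1) / (1 - x ^ m₁) ^ (α+1) - 1/(2*α))
        (𝓝[<] (1:ℝ)) atTop := by
      have := tendsto_atTop_add_const_right (𝓝[<] (1:ℝ)) (-(1/(2*α))) hTtop
      simpa [sub_eq_add_neg] using this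
    apply tendsto_atTop_mono' _ _ h1
    filter_upwards [Ioo_mem_nhdsLT_of_mem
      (by constructor <;> norm_num : (1:ℝ) ∈ Ioc (0:ℝ) 1)] with x hx
    have hx' : x ∈ Ico (0:ℝ) 1 := ⟨hx.1.le, hx.2⟩
    rw [hK x hx']
    have := hS0 x hx'
    have := hG0 x hx'
    linarith
  -- continuity on Icc 0 b for b < 1
  have hcont : ∀ b, 0 ≤ b → b < 1 → ContinuousOn K (Icc (0:ℝ) b) := by
    intro b hb0 hb1
    have hsub : Icc (0:ℝ) b ⊆ Ico (0:ℝ) 1 := fun x hx => ⟨hx.1, lt_of_le_of_lt hx.2 hb1⟩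
    have hScont : ContinuousOn (fun x : ℝ => ∑' n : ℕ, A (n + N) * x ^ h (n + N))
        (Icc (0:ℝ) b) := by
      rw [continuousOn_iff_continuous_restrict]
      apply continuous_tsum (f := fun (n : ℕ) (x : Icc (0:ℝ) b) => A (n+N) * (x:ℝ) ^ h (n+N))
        (u := fun n => A (n+N) * b ^ (n+N))
      · intro i
        exact continuous_const.mul ((continuous_subtype_val).pow _)
      · exact (summable_nat_add_iff N).2 (hsum b ⟨hb0, hb1⟩).summable
      · intro n x
        rw [Real.norm_eq_abs, abs_of_nonneg (mul_nonneg (hA _) (pow_nonneg x.2.1 _))]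
        refine mul_le_mul_of_nonneg_left ?_ (hA _)
        calc (x:ℝ) ^ h (n+N) ≤ b ^ h (n+N) := pow_le_pow_left₀ x.2.1 x.2.2 _
          _ ≤ b ^ (n+N) := pow_le_pow_of_le_one hb0 hb1.le (hh _)
    have hd₀ : ∀ x ∈ Icc (0:ℝ) b, (1:ℝ) - x ^ m₀ ≠ 0 := by
      intro x hx
      have := hpowlt m₀ hm₀ x hx.1 ((hsub hx).2); linarith
    have hGcont : ContinuousOn
        (fun x : ℝ => (1/(2*α)) * (((1 + x ^ m₀)/(1 - x ^ m₀)) ^ α - 1)) (Icc (0:ℝ) b) := by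
      apply continuousOn_const.mul
      apply ContinuousOn.sub _ continuousOn_const
      apply ContinuousOn.rpow_const _ (fun x _ => Or.inr hα0.le)
      exact ((continuous_const.add (continuous_pow m₀)).continuousOn).div
        ((continuous_const.sub (continuous_pow m₀)).continuousOn) hd₀
    have hTcont : ContinuousOn
        (fun x : ℝ => x ^ m₂ * (1 + x ^ m₁) ^ (α-1) / (1 - x ^ m₁) ^ (α+1)) (Icc (0:ℝ) b) := by
      apply ContinuousOn.div
      · exact ((continuous_pow m₂).continuousOn).mul
          (((continuous_const.add (continuous_pow m₁)).continuousOn).rpow_const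
            (fun x _ => Or.inr (by linarith)))
      · exact ((continuous_const.sub (continuous_pow m₁)).continuousOn).rpow_const
          (fun x _ => Or.inr (by linarith))
      · intro x hx
        have : x ^ m₁ < 1 := hpowlt m₁ hm₁ x hx.1 ((hsub hx).2)
        exact (Real.rpow_pos_of_pos (by linarith) _).ne'
    refine ContinuousOn.congr
      (((hScont.add hGcont).add hTcont).sub (continuousOn_const (c := 1/(2*α)))) ?_
    intro x hx
    exact hK x (hsub hx)
  -- unique root
  have hroot : ∃! r : ℝ, r ∈ Ioo (0 : ℝ) 1 ∧ K r = 0 := by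
    obtain ⟨x₂, hx₂m, hx₂pos⟩ : ∃ x₂, x₂ ∈ Ioo (0:ℝ) 1 ∧ 0 < K x₂ := by
      have h1 : ∀ᶠ x in 𝓝[<] (1:ℝ), 0 < K x := htop.eventually (eventually_gt_atTop 0)
      have h2 : ∀ᶠ x in 𝓝[<] (1:ℝ), x ∈ Ioo (0:ℝ) 1 :=
        Ioo_mem_nhdsLT_of_mem (by constructor <;> norm_num)
      obtain ⟨x, hx1, hx2⟩ := (h2.and h1).exists
      exact ⟨x, hx1, hx2⟩
    obtain ⟨r, hr, hKr⟩ := intermediate_value_Ioo hx₂m.1.le (hcont x₂ hx₂m.1.le hx₂m.2)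
      (⟨hzero, hx₂pos⟩ : (0:ℝ) ∈ Ioo (K 0) (K x₂))
    have hrmem : r ∈ Ioo (0:ℝ) 1 := ⟨hr.1, hr.2.trans hx₂m.2⟩
    refine ⟨r, ⟨hrmem, hKr⟩, ?_⟩
    rintro r' ⟨hr'mem, hKr'⟩
    rcases lt_trichotomy r' r with hlt | heq | hgt
    · have := hmono hr'mem hrmem hlt; rw [hKr, hKr'] at this; linarith
    · exact heq
    · have := hmono hrmem hr'mem hgt; rw [hKr, hKr'] at this; linarith
  exact ⟨hmono, hzero, htop, hroot⟩
end
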